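/- Let X be a transitive subshift which is the orbit closure of a recurrent point, and suppose X has j ≥ 2 proper minimal subsystems, exactly i of which are infinite (0 ≤ i ≤ j). Then liminf_{n→∞} (c_X(n) − (j+i)n) = ∞. -/

import Mathlib

open Filter Topology MeasureTheory

variable {A : Type*} {B : Type*}

/-- The shift by `m` on bi-infinite sequences. -/
def shiftBy (m : ℤ) (x : ℤ → A) : ℤ → A := fun i => x (i + m)

/-- The orbit closure of a point. -/
def orbitClosure [TopologicalSpace A] (x : ℤ → A) : Set (ℤ → A) :=
  closure {y | ∃ m : ℤ, y = shiftBy m x}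

/-- A set of sequences invariant under all shifts. -/
def ShiftInvariant (X : Set (ℤ → A)) : Prop := ∀ m : ℤ, ∀ y ∈ X, shiftBy m y ∈ X

/-- A subshift: closed and shift-invariant. -/
def IsSubshift [TopologicalSpace A] (X : Set (ℤ → A)) : Prop :=
  IsClosed X ∧ ShiftInvariant X

/-- The word `w` occurs in `x` at position `i`. -/
def occursAt (x : ℤ → A) (w : List A) (i : ℤ) : Prop :=
  ∀ k : Fin w.length, x (i + (k.val : ℤ)) = w.get k

/-- The word `w` occurs somewhere in some point of `X`. -/
def WordIn (X : Set (ℤ → A)) (w : List A) : Prop :=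
  ∃ x ∈ X, ∃ i : ℤ, occursAt x w i

/-- The language of `X` in length `n`. -/
def langOf (X : Set (ℤ → A)) (n : ℕ) : Set (List A) :=
  {w | w.length = n ∧ WordIn X w}

/-- The complexity function of `X`. -/
noncomputable def complexity (X : Set (ℤ → A)) (n : ℕ) : ℕ := (langOf X n).ncard

/-- `w` is right-special in `X`. -/
def RightSpecial (X : Set (ℤ → A)) (w : List A) : Prop :=
  ∃ a b : A, a ≠ b ∧ WordIn X (w ++ [a]) ∧ WordIn X (w ++ [b])

/-- `w` is left-special in `X`. -/
def LeftSpecial (X : Set (ℤ → A)) (w : List A) : Prop :=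
  ∃ a b : A, a ≠ b ∧ WordIn X (a :: w) ∧ WordIn X (b :: w)

/-- The set of right-special words of length `n`. -/
def RS (X : Set (ℤ → A)) (n : ℕ) : Set (List A) :=
  {w | w.length = n ∧ RightSpecial X w}

/-- The length-`ℓ` word of `x` starting at position `i`. -/
def wordAt (x : ℤ → A) (i : ℤ) (ℓ : ℕ) : List A :=
  List.ofFn (fun t : Fin ℓ => x (i + (t.val : ℤ)))

/-- `x` is a recurrent point: every word in it occurs infinitely often. -/
def RecurrentPt (x : ℤ → A) : Prop :=
  ∀ n : ℕ, ∀ i N : ℤ, ∃ j : ℤ, N ≤ j ∧ ∀ k : ℕ, k < n → x (j + k) = x (i + k)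

/-- `x` is eventually periodic to the right. -/
def EventuallyPeriodicRight (x : ℤ → A) : Prop :=
  ∃ p : ℤ, 0 < p ∧ ∃ N : ℤ, ∀ i : ℤ, N < i → x (i + p) = x i

/-- `x` is eventually periodic to the left. -/
def EventuallyPeriodicLeft (x : ℤ → A) : Prop :=
  ∃ p : ℤ, 0 < p ∧ ∃ N : ℤ, ∀ i : ℤ, i < N → x (i - p) = x i

/-- `M` is a minimal subsystem of `X`. -/
def MinimalSubsystem [TopologicalSpace A] (X M : Set (ℤ → A)) : Prop :=
  M ⊆ X ∧ M.Nonempty ∧ IsClosed M ∧ ShiftInvariant M ∧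
    ∀ M' ⊆ M, M'.Nonempty → IsClosed M' → ShiftInvariant M' → M' = M

/-- `x` is a generic point for the measure `μ`. -/
def GenericFor [TopologicalSpace A] [MeasurableSpace A] (x : ℤ → A)
    (μ : Measure (ℤ → A)) : Prop :=
  ∀ f : (ℤ → A) → ℝ, Continuous f →
    Tendsto (fun N : ℕ => (∑ i ∈ Finset.range N, f (shiftBy i x)) / (N : ℝ)) atTop
      (𝓝 (∫ y, f y ∂μ))

/-- `μ` is a generic measure for `X`. -/
def GenericMeasure [TopologicalSpace A] [MeasurableSpace A] (X : Set (ℤ → A))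
    (μ : Measure (ℤ → A)) : Prop :=
  ∃ x ∈ X, GenericFor x μ

/-!
Write `c = c_X`. Then `c (n+1) - c n` is the sum, over the words `w` of length `n`, of the number
of right extensions of `w` minus one. Distinct minimal subsystems are disjoint, so their languages
are disjoint in large lengths. A proper subsystem `M` of the orbit closure of a recurrent point
has, in every large length, a word with an extension in `X` that leaves `M`; if `M` is infinite
it has right-special words of its own in every length. So each minimal subsystem adds at least
`1`, and each infinite one at least `2`, to `c (n+1) - c n`, which is therefore eventually at
least `j + i`.

If from some length on every right-special word of `X` were a word of some minimal subsystem,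
then, as `x` passes from the language of one minimal subsystem to that of another, some window
of `x` would lie in none of them; no right extension of that window along `x` would be
right-special, so `x` would be eventually periodic to the right and `c` bounded, against its
growth. Hence the increment exceeds `j + i` infinitely often, and `c n - (j + i) n → ∞`.
-/

section Words

@[simp] lemma length_wordAt (x : ℤ → A) (i : ℤ) (ℓ : ℕ) : (wordAt x i ℓ).length = ℓ := by
  simp [wordAt]

lemma occursAt_iff_getElem {y : ℤ → A} {w : List A} {i : ℤ} :
    occursAt y w i ↔ ∀ k (hk : k < w.length), y (i + k) = w[k] :=
  ⟨fun h k hk => h ⟨k, hk⟩, fun h k => h k k.isLt⟩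

lemma occursAt_wordAt (x : ℤ → A) (i : ℤ) (ℓ : ℕ) : occursAt x (wordAt x i ℓ) i :=
  occursAt_iff_getElem.2 fun k _ => by simp [wordAt]

lemma occursAt_iff_wordAt_eq {y : ℤ → A} {w : List A} {i : ℤ} :
    occursAt y w i ↔ wordAt y i w.length = w := by
  refine ⟨fun h => List.ext_get (by simp) fun k h₁ h₂ => ?_, fun h => h ▸ occursAt_wordAt y i _⟩
  simpa [wordAt] using h ⟨k, h₂⟩

lemma occursAt.wordAt_eq {y : ℤ → A} {w : List A} {i : ℤ} (h : occursAt y w i) :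
    wordAt y i w.length = w :=
  occursAt_iff_wordAt_eq.1 h

lemma wordIn_wordAt {Y : Set (ℤ → A)} {y : ℤ → A} (hy : y ∈ Y) (i : ℤ) (ℓ : ℕ) :
    WordIn Y (wordAt y i ℓ) :=
  ⟨y, hy, i, occursAt_wordAt y i ℓ⟩

lemma wordAt_mem_langOf {Y : Set (ℤ → A)} {y : ℤ → A} (hy : y ∈ Y) (i : ℤ) (ℓ : ℕ) :
    wordAt y i ℓ ∈ langOf Y ℓ :=
  ⟨length_wordAt y i ℓ, wordIn_wordAt hy i ℓ⟩

lemma WordIn.mono {Y Z : Set (ℤ → A)} (h : Y ⊆ Z) {w : List A} (hw : WordIn Y w) :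
    WordIn Z w :=
  let ⟨z, hz, i, hi⟩ := hw
  ⟨z, h hz, i, hi⟩

lemma wordAt_eq_wordAt_iff {y z : ℤ → A} {i i' : ℤ} {ℓ : ℕ} :
    wordAt y i ℓ = wordAt z i' ℓ ↔ ∀ k < ℓ, y (i + k) = z (i' + k) := by
  simp only [wordAt, List.ofFn_inj, funext_iff, Fin.forall_iff]

lemma wordAt_add (x : ℤ → A) (i : ℤ) (a b : ℕ) :
    wordAt x i (a + b) = wordAt x i a ++ wordAt x (i + a) b := by
  simp [wordAt, List.ofFn_add, add_assoc]

lemma occursAt_append {y : ℤ → A} {u v : List A} {i : ℤ} :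
    occursAt y (u ++ v) i ↔ occursAt y u i ∧ occursAt y v (i + u.length) := by
  simp only [occursAt_iff_wordAt_eq, List.length_append, wordAt_add]
  constructor
  · intro h
    exact List.append_inj h (by simp)
  · rintro ⟨hu, hv⟩
    rw [hu, hv]

lemma WordIn.of_append_left {Y : Set (ℤ → A)} {u v : List A} (h : WordIn Y (u ++ v)) :
    WordIn Y u :=
  let ⟨z, hz, i, hi⟩ := h
  ⟨z, hz, i, (occursAt_append.1 hi).1⟩

lemma WordIn.of_append_right {Y : Set (ℤ → A)} {u v : List A} (h : WordIn Y (u ++ v)) :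
    WordIn Y v :=
  let ⟨z, hz, i, hi⟩ := h
  ⟨z, hz, i + u.length, (occursAt_append.1 hi).2⟩

lemma WordIn.exists_append_singleton {Y : Set (ℤ → A)} {w : List A} (h : WordIn Y w) :
    ∃ a : A, WordIn Y (w ++ [a]) := by
  obtain ⟨z, hz, i, hi⟩ := h
  refine ⟨z (i + w.length), z, hz, i, occursAt_append.2 ⟨hi, ?_⟩⟩
  simp [occursAt]

lemma wordAt_succ (x : ℤ → A) (i : ℤ) (ℓ : ℕ) :
    wordAt x i (ℓ + 1) = wordAt x i ℓ ++ [x (i + ℓ)] := by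
  rw [wordAt_add]
  simp [wordAt]

lemma WordIn.of_wordAt_of_le {Y : Set (ℤ → A)} {y : ℤ → A} {i i' : ℤ} {ℓ ℓ' : ℕ}
    (h : WordIn Y (wordAt y i ℓ)) (hi : i ≤ i') (hl : i' + ℓ' ≤ i + ℓ) :
    WordIn Y (wordAt y i' ℓ') := by
  obtain ⟨a, rfl⟩ : ∃ a : ℕ, i' = i + a := ⟨(i' - i).toNat, by omega⟩
  obtain ⟨b, rfl⟩ : ∃ b : ℕ, ℓ = a + ℓ' + b := ⟨ℓ - a - ℓ', by omega⟩
  rw [add_assoc, wordAt_add, wordAt_add] at h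
  exact h.of_append_right.of_append_left

lemma langOf_disjoint_of_le {M M' : Set (ℤ → A)} {n m : ℕ} (hnm : n ≤ m)
    (h : Disjoint (langOf M n) (langOf M' n)) : Disjoint (langOf M m) (langOf M' m) := by
  rw [Set.disjoint_left] at h ⊢
  rintro w ⟨hlen, hwM⟩ ⟨-, hwM'⟩
  rw [← List.take_append_drop n w] at hwM hwM'
  have hlen' : (w.take n).length = n := by simp [hlen, hnm]
  exact h ⟨hlen', hwM.of_append_left⟩ ⟨hlen', hwM'.of_append_left⟩

end Words

section Topology

variable [TopologicalSpace A] [DiscreteTopology A]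

lemma mem_closure_iff_forall_finite_exists_eqOn {S : Set (ℤ → A)} {y : ℤ → A} :
    y ∈ closure S ↔ ∀ I : Set ℤ, I.Finite → ∃ z ∈ S, Set.EqOn z y I := by
  have hbasis : (𝓝 y).HasBasis Set.Finite fun I => {z | ∀ t ∈ I, z t = y t} := by
    simpa only [nhds_pi, nhds_discrete] using Filter.hasBasis_pi_pure y
  exact mem_closure_iff_nhds_basis hbasis

lemma mem_of_forall_wordIn_wordAt {M : Set (ℤ → A)} (hMc : IsClosed M) (hMi : ShiftInvariant M)
    {y : ℤ → A} (h : ∀ n : ℕ, WordIn M (wordAt y (-n) (2 * n + 1))) : y ∈ M := by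
  rw [← hMc.closure_eq, mem_closure_iff_forall_finite_exists_eqOn]
  intro I hI
  obtain ⟨n, hn⟩ := (hI.image Int.natAbs).bddAbove
  obtain ⟨z, hz, i, hocc⟩ := h n
  refine ⟨shiftBy (i + n) z, hMi _ _ hz, fun t ht => ?_⟩
  have habs : t.natAbs ≤ n := hn ⟨t, ht, rfl⟩
  have := wordAt_eq_wordAt_iff.1 (by simpa using hocc.wordAt_eq) (t + n).toNat (by omega)
  rw [show -(n : ℤ) + (t + n).toNat = t by omega] at this
  rw [← this, shiftBy]
  congr 1
  omega

lemma isClosed_setOf_wordAt (P : List A → Prop) (i : ℤ) (ℓ : ℕ) :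
    IsClosed {y : ℤ → A | P (wordAt y i ℓ)} :=
  have hcont : Continuous fun (y : ℤ → A) (t : Fin ℓ) => y (i + (t : ℕ)) :=
    continuous_pi fun _ => continuous_apply _
  (isClosed_discrete {f : Fin ℓ → A | P (List.ofFn f)}).preimage hcont

lemma eventually_disjoint_langOf [Finite A] {M M' : Set (ℤ → A)} (hMc : IsClosed M)
    (hMi : ShiftInvariant M) (hM'c : IsClosed M') (hM'i : ShiftInvariant M')
    (hdisj : Disjoint M M') : ∀ᶠ n in atTop, Disjoint (langOf M n) (langOf M' n) := by
  suffices ∃ n, Disjoint (langOf M n) (langOf M' n) by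
    obtain ⟨n, hn⟩ := this
    exact eventually_atTop.2 ⟨n, fun m hm => langOf_disjoint_of_le hm hn⟩
  by_contra! hcommon
  set V : ℕ → Set (ℤ → A) := fun n => M ∩ {y | WordIn M' (wordAt y (-n) (2 * n + 1))}
  have hVclosed n : IsClosed (V n) := hMc.inter (isClosed_setOf_wordAt _ _ _)
  have hVanti n : V (n + 1) ⊆ V n := fun y ⟨hyM, hy⟩ =>
    ⟨hyM, hy.of_wordAt_of_le (by omega) (by omega)⟩
  have hVne n : (V n).Nonempty := by
    obtain ⟨w, ⟨hlen, z, hz, i, hocc⟩, -, hwM'⟩ := Set.not_disjoint_iff.1 (hcommon (2 * n + 1))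
    have hw : wordAt (shiftBy (i + n) z) (-n) (2 * n + 1) = w := by
      rw [← hocc.wordAt_eq, hlen, wordAt_eq_wordAt_iff]
      intro k _
      simp only [shiftBy]
      congr 1
      omega
    exact ⟨shiftBy (i + n) z, hMi _ _ hz, show WordIn M' _ from hw ▸ hwM'⟩
  obtain ⟨y, hy⟩ := IsCompact.nonempty_iInter_of_sequence_nonempty_isCompact_isClosed V hVanti
    hVne (hVclosed 0).isCompact hVclosed
  rw [Set.mem_iInter] at hy
  exact Set.disjoint_left.1 hdisj (hy 0).1 (mem_of_forall_wordIn_wordAt hM'c hM'i fun n => (hy n).2)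

end Topology

section OrbitClosure

variable [TopologicalSpace A]

lemma mem_orbitClosure_self (x : ℤ → A) : x ∈ orbitClosure x :=
  subset_closure ⟨0, funext fun i => by simp [shiftBy]⟩

variable [DiscreteTopology A] {x : ℤ → A}

lemma wordIn_orbitClosure_iff {w : List A} :
    WordIn (orbitClosure x) w ↔ ∃ i, occursAt x w i := by
  refine ⟨fun ⟨y, hy, i, hocc⟩ => ?_, fun ⟨i, hocc⟩ => ⟨x, mem_orbitClosure_self x, i, hocc⟩⟩
  obtain ⟨_, ⟨m, rfl⟩, hagree⟩ := mem_closure_iff_forall_finite_exists_eqOn.1 hy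
    (Set.Ico i (i + w.length)) (Set.finite_Ico _ _)
  refine ⟨i + m, occursAt_iff_getElem.2 fun k hk => ?_⟩
  rw [← occursAt_iff_getElem.1 hocc k hk, ← hagree ⟨by omega, by omega⟩, shiftBy, add_right_comm]

lemma RecurrentPt.exists_le_wordAt_eq (hrec : RecurrentPt x) {w : List A} {n : ℕ}
    (hw : w ∈ langOf (orbitClosure x) n) (N : ℤ) : ∃ q, N ≤ q ∧ wordAt x q n = w := by
  obtain ⟨hlen, hw⟩ := hw
  obtain ⟨i, hi⟩ := wordIn_orbitClosure_iff.1 hw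
  obtain ⟨q, hNq, hq⟩ := hrec n i N
  refine ⟨q, hNq, ?_⟩
  rw [← hi.wordAt_eq, hlen, wordAt_eq_wordAt_iff]
  exact hq

end OrbitClosure

section Counting

variable [Finite A] {Y Z : Set (ℤ → A)} {w : List A} {n : ℕ}

lemma langOf_finite (Y : Set (ℤ → A)) (n : ℕ) : (langOf Y n).Finite :=
  (List.finite_length_eq A n).subset fun _ hw => hw.1

noncomputable def langFinset (Y : Set (ℤ → A)) (n : ℕ) : Finset (List A) :=
  (langOf_finite Y n).toFinset

@[simp] lemma mem_langFinset : w ∈ langFinset Y n ↔ w ∈ langOf Y n :=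
  Set.Finite.mem_toFinset _

lemma card_langFinset (Y : Set (ℤ → A)) (n : ℕ) : (langFinset Y n).card = complexity Y n :=
  (Set.ncard_eq_toFinset_card _ _).symm

noncomputable def extCount (Y : Set (ℤ → A)) (w : List A) : ℕ :=
  {a : A | WordIn Y (w ++ [a])}.ncard

lemma one_le_extCount (hw : WordIn Y w) : 1 ≤ extCount Y w :=
  (Set.ncard_pos).2 hw.exists_append_singleton

lemma one_lt_extCount_iff : 1 < extCount Y w ↔ RightSpecial Y w := by
  rw [extCount, Set.one_lt_ncard_iff]
  exact ⟨fun ⟨a, b, ha, hb, hab⟩ => ⟨a, b, hab, ha, hb⟩, fun ⟨a, b, hab, ha, hb⟩ => ⟨a, b, ha, hb, hab⟩⟩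

lemma extCount_mono (h : Y ⊆ Z) (w : List A) : extCount Y w ≤ extCount Z w :=
  Set.ncard_le_ncard fun _ ha => WordIn.mono h ha

lemma extCount_lt_extCount (h : Y ⊆ Z) {b : A} (hbZ : WordIn Z (w ++ [b]))
    (hbY : ¬ WordIn Y (w ++ [b])) : extCount Y w < extCount Z w :=
  Set.ncard_lt_ncard <| (Set.ssubset_iff_of_subset fun _ ha => WordIn.mono h ha).2 ⟨b, hbZ, hbY⟩

lemma complexity_succ_eq_sum (Y : Set (ℤ → A)) (n : ℕ) :
    complexity Y (n + 1) = ∑ w ∈ langFinset Y n, extCount Y w := by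
  classical
  have hmaps : Set.MapsTo List.dropLast (langFinset Y (n + 1) : Set (List A)) (langFinset Y n) := by
    rintro u hu
    simp only [Finset.mem_coe, mem_langFinset] at hu ⊢
    obtain ⟨hlen, hu⟩ := hu
    rw [← List.dropLast_append_getLast (List.ne_nil_of_length_eq_add_one hlen)] at hu
    exact ⟨by simp [hlen], hu.of_append_left⟩
  rw [← card_langFinset, Finset.card_eq_sum_card_fiberwise hmaps]
  refine Finset.sum_congr rfl fun w hw => ?_
  have hwlen : w.length = n := (mem_langFinset.1 hw).1
  have hinj : Function.Injective fun a : A => w ++ [a] := fun a b h => by simpa using h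
  rw [← Set.ncard_coe_finset, extCount, ← Set.ncard_image_of_injective _ hinj]
  congr 1
  ext u
  simp only [Finset.coe_filter, mem_langFinset, Set.mem_ofPred_eq, Set.mem_image]
  constructor
  · rintro ⟨⟨hlen, hu⟩, rfl⟩
    have hu' := List.dropLast_append_getLast (List.ne_nil_of_length_eq_add_one hlen)
    exact ⟨_, hu'.symm ▸ hu, hu'⟩
  · rintro ⟨a, ha, rfl⟩
    exact ⟨⟨by simp [hwlen], ha⟩, List.dropLast_concat⟩

lemma complexity_succ_eq_add_sum (Y : Set (ℤ → A)) (n : ℕ) :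
    complexity Y (n + 1) = complexity Y n + ∑ w ∈ langFinset Y n, (extCount Y w - 1) := by
  rw [complexity_succ_eq_sum, ← card_langFinset, Finset.card_eq_sum_ones, ← Finset.sum_add_distrib]
  refine Finset.sum_congr rfl fun w hw => ?_
  have := one_le_extCount (mem_langFinset.1 hw).2
  omega

lemma complexity_add_sum_le {S : Finset (List A)} (hS : S ⊆ langFinset Y n) :
    complexity Y n + ∑ w ∈ S, (extCount Y w - 1) ≤ complexity Y (n + 1) := by
  rw [complexity_succ_eq_add_sum]
  exact Nat.add_le_add_left (Finset.sum_le_sum_of_subset hS) _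

lemma complexity_mono (Y : Set (ℤ → A)) : Monotone (complexity Y) :=
  monotone_nat_of_le_succ fun n => by
    simpa using complexity_add_sum_le (Y := Y) (n := n) (Finset.empty_subset _)

lemma complexity_lt_succ_of_rightSpecial (hw : w ∈ langOf Y n) (hRS : RightSpecial Y w) :
    complexity Y n < complexity Y (n + 1) := by
  have hle := complexity_add_sum_le (Finset.singleton_subset_iff.2 (mem_langFinset.2 hw))
  rw [Finset.sum_singleton] at hle
  have := one_lt_extCount_iff.2 hRS
  omega

lemma complexity_succ_eq_of_forall_not_rightSpecial (h : ∀ w ∈ langOf Y n, ¬ RightSpecial Y w) :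
    complexity Y (n + 1) = complexity Y n := by
  rw [complexity_succ_eq_add_sum, Finset.sum_eq_zero, add_zero]
  intro w hw
  have := one_lt_extCount_iff.not.2 (h w (mem_langFinset.1 hw))
  omega

end Counting

section Infinite

lemma RightSpecial.of_append_right {Y : Set (ℤ → A)} {u v : List A}
    (h : RightSpecial Y (u ++ v)) : RightSpecial Y v := by
  obtain ⟨a, b, hab, ha, hb⟩ := h
  rw [List.append_assoc] at ha hb
  exact ⟨a, b, hab, ha.of_append_right, hb.of_append_right⟩

lemma eventually_wordAt_ne {y z : ℤ → A} (h : y ≠ z) :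
    ∀ᶠ R : ℕ in atTop, wordAt y (-R) (2 * R + 1) ≠ wordAt z (-R) (2 * R + 1) := by
  obtain ⟨c, hc⟩ := Function.ne_iff.1 h
  filter_upwards [eventually_ge_atTop c.natAbs] with R hR heq
  have := wordAt_eq_wordAt_iff.1 heq (c + R).toNat (by omega)
  rw [show -(R : ℤ) + (c + R).toNat = c by omega] at this
  exact hc this

variable [Finite A] {Y : Set (ℤ → A)}

lemma not_bddAbove_complexity_of_infinite (hY : Y.Infinite) :
    ¬ BddAbove (Set.range (complexity Y)) := by
  rintro ⟨C, hC⟩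
  obtain ⟨t, htY, htcard⟩ := hY.exists_subset_card_eq (C + 1)
  have hsep : ∀ᶠ R : ℕ in atTop, ∀ p ∈ t ×ˢ t, p.1 ≠ p.2 →
      wordAt p.1 (-R) (2 * R + 1) ≠ wordAt p.2 (-R) (2 * R + 1) :=
    eventually_all_finset _ |>.2 fun p _ => eventually_imp_distrib_left.2 eventually_wordAt_ne
  obtain ⟨R, hR⟩ := hsep.exists
  have hinj : Set.InjOn (fun y => wordAt y (-R) (2 * R + 1)) t := fun y hy z hz heq =>
    by_contra fun hne => hR (y, z) (Finset.mk_mem_product hy hz) hne heq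
  have hcard := Set.ncard_le_ncard_of_injOn (t := langOf Y (2 * R + 1)) _
    (fun y hy => ⟨length_wordAt _ _ _, wordIn_wordAt (htY hy) _ _⟩) hinj (langOf_finite Y _)
  rw [Set.ncard_coe_finset, htcard] at hcard
  have := hC (Set.mem_range_self (2 * R + 1))
  rw [complexity] at this
  omega

lemma exists_rightSpecial_of_infinite (hY : Y.Infinite) (n : ℕ) :
    ∃ w ∈ langOf Y n, RightSpecial Y w := by
  by_contra! h
  refine not_bddAbove_complexity_of_infinite hY ⟨complexity Y n, ?_⟩
  rintro _ ⟨m, rfl⟩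
  -- beyond length `n` there are no right-special words either, so the complexity stays constant
  have hconst : ∀ k, complexity Y (n + k) = complexity Y n := by
    intro k
    induction k with
    | zero => rfl
    | succ k ih =>
      refine (complexity_succ_eq_of_forall_not_rightSpecial fun w ⟨hlen, hw⟩ hRS => ?_).trans ih
      rw [← List.take_append_drop k w] at hw hRS
      exact h _ ⟨by simp [hlen], hw.of_append_right⟩ hRS.of_append_right
  exact (complexity_mono Y (Nat.le_add_left m n)).trans (hconst m).le

lemma complexity_lt_succ_of_infinite (hY : Y.Infinite) (n : ℕ) :
    complexity Y n < complexity Y (n + 1) :=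
  let ⟨_, hw, hRS⟩ := exists_rightSpecial_of_infinite hY n
  complexity_lt_succ_of_rightSpecial hw hRS

end Infinite

section Exits

variable [TopologicalSpace A] [DiscreteTopology A] {x : ℤ → A} {M : Set (ℤ → A)}

lemma langOf_subset_of_forall_extend (hrec : RecurrentPt x) (hMX : M ⊆ orbitClosure x)
    (hM : M.Nonempty) {n : ℕ}
    (hext : ∀ w ∈ langOf M n, ∀ b : A, WordIn (orbitClosure x) (w ++ [b]) → WordIn M (w ++ [b])) :
    langOf (orbitClosure x) n ⊆ langOf M n := by
  obtain ⟨y, hy⟩ := hM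
  obtain ⟨p, -, hp⟩ := hrec.exists_le_wordAt_eq (wordAt_mem_langOf (hMX hy) 0 n) 0
  have hprop : ∀ d : ℕ, WordIn M (wordAt x (p + d) n) := by
    intro d
    induction d with
    | zero => simpa [hp] using wordIn_wordAt hy 0 n
    | succ d ih =>
      have hstep := hext _ ⟨length_wordAt _ _ _, ih⟩ (x (p + d + n)) <| by
        rw [← wordAt_succ]
        exact wordIn_wordAt (mem_orbitClosure_self x) _ _
      rw [← wordAt_succ] at hstep
      exact hstep.of_wordAt_of_le (by omega) (by push_cast; omega)
  intro w hw
  obtain ⟨q, hpq, rfl⟩ := hrec.exists_le_wordAt_eq hw p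
  obtain ⟨d, rfl⟩ : ∃ d : ℕ, q = p + d := ⟨(q - p).toNat, by omega⟩
  exact ⟨hw.1, hprop d⟩

lemma subset_of_frequently_langOf_subset {Y : Set (ℤ → A)} (hMc : IsClosed M)
    (hMi : ShiftInvariant M) (h : ∃ᶠ n in atTop, langOf Y n ⊆ langOf M n) : Y ⊆ M := by
  intro y hy
  refine mem_of_forall_wordIn_wordAt hMc hMi fun n => ?_
  obtain ⟨m, hm, hsub⟩ := frequently_atTop.1 h (2 * n + 1)
  exact (hsub ⟨length_wordAt _ _ _, wordIn_wordAt hy (-n) m⟩).2.of_wordAt_of_le le_rfl (by omega)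

lemma eventually_exists_exit (hrec : RecurrentPt x) (hMX : M ⊆ orbitClosure x) (hM : M.Nonempty)
    (hMc : IsClosed M) (hMi : ShiftInvariant M) (hne : M ≠ orbitClosure x) :
    ∀ᶠ n in atTop, ∃ w ∈ langOf M n, ∃ b : A,
      WordIn (orbitClosure x) (w ++ [b]) ∧ ¬ WordIn M (w ++ [b]) := by
  by_contra h
  rw [not_eventually] at h
  refine hne (hMX.antisymm (subset_of_frequently_langOf_subset hMc hMi (h.mono fun n hn => ?_)))
  push Not at hn
  exact langOf_subset_of_forall_extend hrec hMX hM hn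

end Exits

lemma MinimalSubsystem.disjoint [TopologicalSpace A] {X M M' : Set (ℤ → A)}
    (h : MinimalSubsystem X M) (h' : MinimalSubsystem X M') (hne : M ≠ M') : Disjoint M M' := by
  rw [Set.disjoint_iff_inter_eq_empty, ← Set.not_nonempty_iff_eq_empty]
  intro hMM'
  obtain ⟨-, -, hMc, hMi, hMmin⟩ := h
  obtain ⟨-, -, hM'c, hM'i, hM'min⟩ := h'
  have hinv : ShiftInvariant (M ∩ M') := fun m y hy => ⟨hMi m y hy.1, hM'i m y hy.2⟩
  exact hne <| (hMmin _ Set.inter_subset_left hMM' (hMc.inter hM'c) hinv).symm.trans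
    (hM'min _ Set.inter_subset_right hMM' (hMc.inter hM'c) hinv)

lemma eventually_disjoint_langOf_of_minimalSubsystem [Finite A] [TopologicalSpace A]
    [DiscreteTopology A] {X : Set (ℤ → A)} (𝓕 : Finset (Set (ℤ → A)))
    (h𝓕 : ∀ M ∈ 𝓕, MinimalSubsystem X M) :
    ∀ᶠ n in atTop, ∀ M ∈ 𝓕, ∀ M' ∈ 𝓕, M ≠ M' → Disjoint (langOf M n) (langOf M' n) := by
  simp only [eventually_all_finset, eventually_imp_distrib_left]
  intro M hM M' hM' hne
  obtain ⟨-, -, hMc, hMi, -⟩ := h𝓕 M hM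
  obtain ⟨-, -, hM'c, hM'i, -⟩ := h𝓕 M' hM'
  exact eventually_disjoint_langOf hMc hMi hM'c hM'i ((h𝓕 M hM).disjoint (h𝓕 M' hM') hne)

section Increment

variable [Finite A] {X : Set (ℤ → A)} {n : ℕ}

open Classical in
lemma ite_infinite_le_sum_extCount_sub_one {M : Set (ℤ → A)} (hMX : M ⊆ X) {w : List A}
    (hw : w ∈ langOf M n) {b : A} (hbX : WordIn X (w ++ [b])) (hbM : ¬ WordIn M (w ++ [b])) :
    (if M.Infinite then 2 else 1) ≤ ∑ v ∈ langFinset M n, (extCount X v - 1) := by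
  have hlt : ∑ v ∈ langFinset M n, (extCount M v - 1) < ∑ v ∈ langFinset M n, (extCount X v - 1) := by
    refine Finset.sum_lt_sum (fun v _ => Nat.sub_le_sub_right (extCount_mono hMX v) 1)
      ⟨w, mem_langFinset.2 hw, ?_⟩
    have := one_le_extCount hw.2
    have := extCount_lt_extCount hMX hbX hbM
    omega
  split_ifs with hinf
  · have := complexity_lt_succ_of_infinite hinf n
    rw [complexity_succ_eq_add_sum] at this
    omega
  · omega

open Classical in
lemma complexity_add_le_of_exits {𝓕 : Finset (Set (ℤ → A))} (hsub : ∀ M ∈ 𝓕, M ⊆ X)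
    (hdisj : ∀ M ∈ 𝓕, ∀ M' ∈ 𝓕, M ≠ M' → Disjoint (langOf M n) (langOf M' n))
    (hexit : ∀ M ∈ 𝓕, ∃ w ∈ langOf M n, ∃ b : A, WordIn X (w ++ [b]) ∧ ¬ WordIn M (w ++ [b]))
    {E : Finset (List A)}
    (hE : ∀ w ∈ E, w ∈ langOf X n ∧ RightSpecial X w ∧ ∀ M ∈ 𝓕, ¬ WordIn M w) :
    complexity X n + ∑ M ∈ 𝓕, (if M.Infinite then 2 else 1) + E.card ≤ complexity X (n + 1) := by
  set B := 𝓕.biUnion fun M => langFinset M n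
  have hEB : Disjoint E B := Finset.disjoint_left.2 fun w hw hwB => by
    obtain ⟨M, hM, hwM⟩ := Finset.mem_biUnion.1 hwB
    exact (hE w hw).2.2 M hM (mem_langFinset.1 hwM).2
  have hsubset : E ∪ B ⊆ langFinset X n := by
    refine Finset.union_subset (fun w hw => mem_langFinset.2 (hE w hw).1) ?_
    refine Finset.biUnion_subset.2 fun M hM w hw => ?_
    obtain ⟨hlen, hwM⟩ := mem_langFinset.1 hw
    exact mem_langFinset.2 ⟨hlen, hwM.mono (hsub M hM)⟩
  have hEsum : E.card ≤ ∑ w ∈ E, (extCount X w - 1) := by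
    rw [Finset.card_eq_sum_ones]
    refine Finset.sum_le_sum fun w hw => ?_
    have := one_lt_extCount_iff.2 (hE w hw).2.1
    omega
  have hBsum : ∑ M ∈ 𝓕, (if M.Infinite then 2 else 1) ≤ ∑ w ∈ B, (extCount X w - 1) := by
    have hpw : (𝓕 : Set (Set (ℤ → A))).PairwiseDisjoint fun M => langFinset M n :=
      fun M hM M' hM' hne => Set.Finite.disjoint_toFinset.2 (hdisj M hM M' hM' hne)
    rw [Finset.sum_biUnion hpw]
    refine Finset.sum_le_sum fun M hM => ?_
    obtain ⟨w, hw, b, hbX, hbM⟩ := hexit M hM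
    exact ite_infinite_le_sum_extCount_sub_one (hsub M hM) hw hbX hbM
  have := complexity_add_sum_le hsubset
  rw [Finset.sum_union hEB] at this
  omega

open Classical in
lemma RecurrentPt.eventually_complexity_add_le [TopologicalSpace A] [DiscreteTopology A]
    {x : ℤ → A} (hrec : RecurrentPt x) (𝓕 : Finset (Set (ℤ → A)))
    (h𝓕 : ∀ M ∈ 𝓕, MinimalSubsystem (orbitClosure x) M ∧ M ≠ orbitClosure x) :
    ∀ᶠ n in atTop, ∀ E : Finset (List A), (∀ w ∈ E, w ∈ langOf (orbitClosure x) n ∧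
      RightSpecial (orbitClosure x) w ∧ ∀ M ∈ 𝓕, ¬ WordIn M w) →
      complexity (orbitClosure x) n + ∑ M ∈ 𝓕, (if M.Infinite then 2 else 1) + E.card ≤
        complexity (orbitClosure x) (n + 1) := by
  have hexit : ∀ᶠ n in atTop, ∀ M ∈ 𝓕, ∃ w ∈ langOf M n, ∃ b : A,
      WordIn (orbitClosure x) (w ++ [b]) ∧ ¬ WordIn M (w ++ [b]) := by
    refine eventually_all_finset 𝓕 |>.2 fun M hM => ?_
    obtain ⟨⟨hMX, hM, hMc, hMi, -⟩, hne⟩ := h𝓕 M hM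
    exact eventually_exists_exit hrec hMX hM hMc hMi hne
  filter_upwards [eventually_disjoint_langOf_of_minimalSubsystem 𝓕 fun M hM => (h𝓕 M hM).1,
    hexit] with n hdisj hexit E hE
  exact complexity_add_le_of_exits (fun M hM => (h𝓕 M hM).1.1) hdisj hexit hE

end Increment

section Periodicity

variable [TopologicalSpace A] [DiscreteTopology A] {x : ℤ → A}

lemma RecurrentPt.eventuallyPeriodicRight_of_not_rightSpecial (hrec : RecurrentPt x) {q : ℤ}
    {n : ℕ} (h : ∀ k, ¬ RightSpecial (orbitClosure x) (wordAt x q (n + k))) :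
    EventuallyPeriodicRight x := by
  have hxX := mem_orbitClosure_self x
  obtain ⟨q', hqq', hq'⟩ := hrec.exists_le_wordAt_eq (wordAt_mem_langOf hxX q n) (q + 1)
  -- a word that is not right-special has only one continuation, so both occurrences continue alike
  have hagree : ∀ k, wordAt x q (n + k) = wordAt x q' (n + k) := by
    intro k
    induction k with
    | zero => exact hq'.symm
    | succ k ih =>
      rw [← add_assoc, wordAt_succ, wordAt_succ, ih]
      by_contra hne
      refine h k ⟨x (q + (n + k : ℕ)), x (q' + (n + k : ℕ)), fun heq => hne (by rw [heq]), ?_, ?_⟩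
      · rw [← wordAt_succ]
        exact wordIn_wordAt hxX _ _
      · rw [ih, ← wordAt_succ]
        exact wordIn_wordAt hxX _ _
  refine ⟨q' - q, by omega, q - 1, fun i hi => ?_⟩
  obtain ⟨d, rfl⟩ : ∃ d : ℕ, i = q + d := ⟨(i - q).toNat, by omega⟩
  rw [wordAt_eq_wordAt_iff.1 (hagree (d + 1)) d (by omega)]
  congr 1
  ring

lemma RecurrentPt.bddAbove_complexity (hrec : RecurrentPt x) (hper : EventuallyPeriodicRight x) :
    BddAbove (Set.range (complexity (orbitClosure x))) := by
  obtain ⟨p, hp, N, hN⟩ := hper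
  have hperiod : ∀ i, N < i → ∀ k : ℕ, x (i + k * p) = x i := by
    intro i hi k
    induction k with
    | zero => simp
    | succ k ih =>
      have hkp : 0 ≤ (k : ℤ) * p := mul_nonneg k.cast_nonneg hp.le
      rw [Nat.cast_succ, add_mul, one_mul, ← add_assoc, hN _ (by linarith), ih]
  refine ⟨p.toNat, ?_⟩
  rintro _ ⟨n, rfl⟩
  -- every word occurs to the right of `N`, hence at one of the `p` positions `N + 1 + r`, `r < p`
  have hsub : langOf (orbitClosure x) n ⊆
      (fun r : ℕ => wordAt x (N + 1 + r) n) '' Set.Iio p.toNat := by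
    intro w hw
    obtain ⟨i, hNi, rfl⟩ := hrec.exists_le_wordAt_eq hw (N + 1)
    have hr₀ := Int.emod_nonneg (i - (N + 1)) hp.ne'
    have hr₁ := Int.emod_lt_of_pos (i - (N + 1)) hp
    have hk₀ : 0 ≤ (i - (N + 1)) / p := Int.ediv_nonneg (by omega) hp.le
    refine ⟨((i - (N + 1)) % p).toNat, by simp only [Set.mem_Iio]; omega, ?_⟩
    rw [wordAt_eq_wordAt_iff]
    intro t _
    rw [← hperiod _ (by omega) ((i - (N + 1)) / p).toNat]
    congr 1
    rw [Int.toNat_of_nonneg hr₀, Int.toNat_of_nonneg hk₀]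
    linarith [Int.emod_add_mul_ediv (i - (N + 1)) p]
  calc complexity (orbitClosure x) n ≤ ((fun r : ℕ => wordAt x (N + 1 + r) n) '' Set.Iio p.toNat).ncard :=
        Set.ncard_le_ncard hsub ((Set.finite_Iio _).image _)
    _ ≤ (Set.Iio p.toNat).ncard := Set.ncard_image_le (Set.finite_Iio _)
    _ = p.toNat := by simp

end Periodicity

section Transient

variable [TopologicalSpace A] [DiscreteTopology A] {x : ℤ → A}

lemma RecurrentPt.exists_wordAt_forall_not_wordIn (hrec : RecurrentPt x) {M : Set (ℤ → A)}
    {𝓕 : Set (Set (ℤ → A))} {n : ℕ} (hMX : M ⊆ orbitClosure x) (hM : M.Nonempty)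
    (hdisj : ∀ M' ∈ 𝓕, M' ≠ M → Disjoint (langOf M n) (langOf M' n)) {w : List A}
    (hw : w ∈ langOf (orbitClosure x) (n + 1)) (hwM : ¬ WordIn M w) :
    ∃ q, ∀ M' ∈ 𝓕, ¬ WordIn M' (wordAt x q (n + 1)) := by
  classical
  obtain ⟨y, hy⟩ := hM
  obtain ⟨q₁, -, hq₁⟩ := hrec.exists_le_wordAt_eq (wordAt_mem_langOf (hMX hy) 0 (n + 1)) 0
  obtain ⟨q₂, hq₁₂, rfl⟩ := hrec.exists_le_wordAt_eq hw q₁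
  have hex : ∃ d : ℕ, ¬ WordIn M (wordAt x (q₁ + d) (n + 1)) :=
    ⟨(q₂ - q₁).toNat, by rwa [show q₁ + (q₂ - q₁).toNat = q₂ by omega]⟩
  have hfirst := Nat.find_spec hex
  have hpos : Nat.find hex ≠ 0 := fun h0 => by
    rw [h0, Nat.cast_zero, add_zero, hq₁] at hfirst
    exact hfirst (wordIn_wordAt hy 0 (n + 1))
  have hprev := not_not.1 (Nat.find_min hex (Nat.sub_one_lt hpos))
  refine ⟨q₁ + Nat.find hex, fun M' hM' hM'w => ?_⟩
  have hne : M' ≠ M := by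
    rintro rfl
    exact hfirst hM'w
  -- the first window leaving the language of `M` overlaps the previous one in a word of length `n`
  exact Set.disjoint_left.1 (hdisj M' hM' hne)
    ⟨length_wordAt _ _ _, hprev.of_wordAt_of_le (i' := q₁ + Nat.find hex) (by omega) (by omega)⟩
    ⟨length_wordAt _ _ _, hM'w.of_wordAt_of_le le_rfl (by omega)⟩

lemma frequently_exists_rightSpecial_forall_not_wordIn [Finite A] (hrec : RecurrentPt x)
    (𝓕 : Finset (Set (ℤ → A))) (h𝓕 : ∀ M ∈ 𝓕, MinimalSubsystem (orbitClosure x) M)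
    {M₁ M₂ : Set (ℤ → A)} (h₁ : M₁ ∈ 𝓕) (h₂ : M₂ ∈ 𝓕) (hne : M₁ ≠ M₂)
    (hunb : ¬ BddAbove (Set.range (complexity (orbitClosure x)))) :
    ∃ᶠ n in atTop, ∃ w ∈ langOf (orbitClosure x) n,
      RightSpecial (orbitClosure x) w ∧ ∀ M ∈ 𝓕, ¬ WordIn M w := by
  by_contra hcon
  rw [not_frequently] at hcon
  obtain ⟨N, hN⟩ :=
    (hcon.and (eventually_disjoint_langOf_of_minimalSubsystem 𝓕 h𝓕)).exists_forall_of_atTop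
  obtain ⟨y, hy⟩ := (h𝓕 M₂ h₂).2.1
  have hyM₁ : ¬ WordIn M₁ (wordAt y 0 (N + 1)) := fun hM₁ =>
    Set.disjoint_left.1 ((hN (N + 1) (by omega)).2 M₁ h₁ M₂ h₂ hne) ⟨length_wordAt _ _ _, hM₁⟩
      (wordAt_mem_langOf hy 0 (N + 1))
  obtain ⟨q, hq⟩ := hrec.exists_wordAt_forall_not_wordIn (𝓕 := 𝓕) (h𝓕 M₁ h₁).1 (h𝓕 M₁ h₁).2.1
    (fun M' hM' hne' => (hN N le_rfl).2 M₁ h₁ M' hM' hne'.symm)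
    (wordAt_mem_langOf ((h𝓕 M₂ h₂).1 hy) 0 (N + 1)) hyM₁
  refine hunb (hrec.bddAbove_complexity (hrec.eventuallyPeriodicRight_of_not_rightSpecial
    (q := q) (n := N + 1) fun k hRS => (hN (N + 1 + k) (by omega)).1 ?_))
  exact ⟨_, wordAt_mem_langOf (mem_orbitClosure_self x) q _, hRS,
    fun M hM hwM => hq M hM (hwM.of_wordAt_of_le le_rfl (by omega))⟩

end Transient

lemma not_bddAbove_range_of_eventually_lt_succ {f : ℕ → ℕ} (h : ∀ᶠ n in atTop, f n < f (n + 1)) :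
    ¬ BddAbove (Set.range f) := by
  obtain ⟨N, hN⟩ := eventually_atTop.1 h
  have hmono : StrictMono fun n => f (n + N) :=
    strictMono_nat_of_lt_succ fun n => by simpa [add_right_comm] using hN (n + N) (by omega)
  exact not_bddAbove_of_tendsto_atTop ((tendsto_add_atTop_iff_nat N).1 hmono.tendsto_atTop)

lemma tendsto_atTop_of_eventually_le_succ_of_frequently_lt_succ {f : ℕ → ℤ}
    (hmono : ∀ᶠ n in atTop, f n ≤ f (n + 1)) (hfreq : ∃ᶠ n in atTop, f n < f (n + 1)) :
    Tendsto f atTop atTop := by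
  obtain ⟨N, hN⟩ := eventually_atTop.1 hmono
  have hle : ∀ a, N ≤ a → ∀ b, a ≤ b → f a ≤ f b := fun a ha b hab => by
    induction b, hab using Nat.le_induction with
    | base => exact le_rfl
    | succ b hab ih => exact ih.trans (hN b (by omega))
  have hgrow : ∀ t : ℕ, ∀ᶠ n in atTop, f N + t ≤ f n := by
    intro t
    induction t with
    | zero => simpa using eventually_atTop.2 ⟨N, hle N le_rfl⟩
    | succ t ih =>
      obtain ⟨M, hM⟩ := eventually_atTop.1 ih
      obtain ⟨m, hm, hfm⟩ := frequently_atTop.1 hfreq (max M N)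
      refine eventually_atTop.2 ⟨m + 1, fun n hn => ?_⟩
      have := hM m (by omega)
      have := hle (m + 1) (by omega) n hn
      push_cast
      omega
  exact tendsto_atTop.2 fun b => (hgrow (b - f N).toNat).mono fun n hn => by omega

lemma Set.Finite.sum_ite_two_one {α : Type*} {S : Set α} (hS : S.Finite) (p : α → Prop)
    [DecidablePred p] :
    ∑ a ∈ hS.toFinset, (if p a then 2 else 1) = S.ncard + {a ∈ S | p a}.ncard := by
  have hsep : {a ∈ S | p a} = ↑(hS.toFinset.filter p) := by
    ext
    simp
  rw [hsep, Set.ncard_coe_finset, Finset.card_filter, Set.ncard_eq_toFinset_card _ hS,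
    Finset.card_eq_sum_ones, ← Finset.sum_add_distrib]
  exact Finset.sum_congr rfl fun a _ => by split_ifs <;> rfl

theorem stmt5_general [Fintype A] [TopologicalSpace A] [DiscreteTopology A]
    (x : ℤ → A) (X : Set (ℤ → A)) (hX : X = orbitClosure x) (hrec : RecurrentPt x)
    (j i : ℕ) (hj : 2 ≤ j)
    (hcard : {M : Set (ℤ → A) | MinimalSubsystem X M}.ncard = j)
    (hproper : ∀ M : Set (ℤ → A), MinimalSubsystem X M → M ≠ X)
    (hinf : {M : Set (ℤ → A) | MinimalSubsystem X M ∧ M.Infinite}.ncard = i) :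
    Tendsto (fun m : ℕ => (complexity X m : ℤ) - ((j : ℤ) + i) * m) atTop atTop := by
  classical
  subst hX
  have hfin : {M | MinimalSubsystem (orbitClosure x) M}.Finite := Set.finite_of_ncard_pos (by omega)
  set 𝓕 := hfin.toFinset
  have h𝓕 : ∀ M ∈ 𝓕, MinimalSubsystem (orbitClosure x) M := fun M hM => hfin.mem_toFinset.1 hM
  have hweight : ∑ M ∈ 𝓕, (if M.Infinite then 2 else 1) = j + i := by
    rw [hfin.sum_ite_two_one, hcard]
    exact congrArg (j + ·) hinf
  have hstep := hweight ▸ hrec.eventually_complexity_add_le 𝓕 fun M hM =>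
    ⟨h𝓕 M hM, hproper M (h𝓕 M hM)⟩
  have hmono : ∀ᶠ n in atTop,
      complexity (orbitClosure x) n + (j + i) ≤ complexity (orbitClosure x) (n + 1) :=
    hstep.mono fun n hn => by simpa using hn ∅ (by simp)
  obtain ⟨M₁, h₁, M₂, h₂, hne⟩ := Finset.one_lt_card.1 <| show 1 < 𝓕.card by
    rw [← Set.ncard_eq_toFinset_card _ hfin]; omega
  have hunb := not_bddAbove_range_of_eventually_lt_succ (f := complexity (orbitClosure x))
    (hmono.mono fun n hn => by omega)
  refine tendsto_atTop_of_eventually_le_succ_of_frequently_lt_succ (hmono.mono fun n hn => ?_)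
    ((frequently_exists_rightSpecial_forall_not_wordIn hrec 𝓕 h𝓕 h₁ h₂ hne hunb).mp
      (hstep.mono fun n hn ⟨w, hw⟩ => ?_))
  · push_cast
    linarith
  · have := hn {w} (by simpa using hw)
    push_cast [Finset.card_singleton] at this ⊢
    linarith

theorem stmt5 [Fintype A] [TopologicalSpace A] [DiscreteTopology A]
    (x : ℤ → A) (X : Set (ℤ → A)) (hX : X = orbitClosure x) (hrec : RecurrentPt x)
    (j i : ℕ) (hj : 2 ≤ j) (hij : i ≤ j)
    (hcard : {M : Set (ℤ → A) | MinimalSubsystem X M}.ncard = j)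
    (hproper : ∀ M : Set (ℤ → A), MinimalSubsystem X M → M ≠ X)
    (hinf : {M : Set (ℤ → A) | MinimalSubsystem X M ∧ M.Infinite}.ncard = i) :
    Tendsto (fun m : ℕ => (complexity X m : ℤ) - ((j : ℤ) + i) * m) atTop atTop :=
  stmt5_general x X hX hrec j i hj hcard hproper hinf
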